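/- Let G be a chordal graph and k a positive integer. If G has a representation (T,β) with rad(T) ≤ k, then there exists a partition P of V(G) with |P| ≤ k+1 such that for every part V ∈ P, every connected component of the induced subgraph G[V] is a complete graph (i.e., G[V] is a disjoint union of complete graphs). (This is the corrected form of the paper's bound |P| ≤ k, accounting for the k+1 possible levels 0,1,…,k of subtrees in a tree of radius at most k.) -/

import Mathlib

open SimpleGraph

/-- A graph is chordal if it contains no hole, i.e. no induced cycle of length at least four. -/
def Chordal {V : Type} (G : SimpleGraph V) : Prop :=
  ∀ n : ℕ, 4 ≤ n → IsEmpty (SimpleGraph.cycleGraph n ↪g G)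

/-- `(T, β)` is a tree-decomposition of `G`. -/
structure IsTreeDecomp {V B : Type} (G : SimpleGraph V) (T : SimpleGraph B) (β : B → Set V) :
    Prop where
  isTree : T.IsTree
  exists_bag : ∀ v : V, ∃ t, v ∈ β t
  adj_bag : ∀ ⦃u v : V⦄, G.Adj u v → ∃ t, u ∈ β t ∧ v ∈ β t
  support_connected : ∀ v : V, (T.induce {t | v ∈ β t}).Connected

/-- The chordality of `G`. -/
noncomputable def chor {V : Type} [Fintype V] (G : SimpleGraph V) : ℕ :=
  sInf {k | 0 < k ∧ ∃ H : Fin k → SimpleGraph V, (∀ i, Chordal (H i)) ∧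
    ∀ u v : V, G.Adj u v ↔ ∀ i, (H i).Adj u v}

/-- The Cartesian (box) product of a family of graphs. -/
def boxProdPi {ι : Type} {B : ι → Type} (T : ∀ i, SimpleGraph (B i)) :
    SimpleGraph (∀ i, B i) where
  Adj x y := ∃ i, (T i).Adj (x i) (y i) ∧ ∀ j, j ≠ i → x j = y j
  symm := by
    refine ⟨?_⟩
    rintro x y ⟨i, h, hj⟩
    exact ⟨i, h.symm, fun j hji => (hj j hji).symm⟩
  loopless := by
    refine ⟨?_⟩
    rintro x ⟨i, h, -⟩
    exact (T i).loopless.irrefl _ h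

/-- The geodesic interval `I(u,v)` of a graph. -/
def geoInterval {V : Type} (G : SimpleGraph V) (u v : V) : Set V :=
  {x | G.dist u v = G.dist u x + G.dist x v}

/-- A set of vertices is (geodesically) convex. -/
def GeoConvex {V : Type} (G : SimpleGraph V) (S : Set V) : Prop :=
  ∀ u ∈ S, ∀ v ∈ S, geoInterval G u v ⊆ S

/-- A median graph. -/
def MedianGraph {V : Type} (M : SimpleGraph V) : Prop :=
  M.Connected ∧ ∀ u v w : V,
    ∃! x, x ∈ geoInterval M u v ∩ geoInterval M u w ∩ geoInterval M v w

/-- `φ` is an isometric embedding of `G` into `H`. -/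
def IsIsometricEmbedding {V W : Type} (G : SimpleGraph V) (H : SimpleGraph W)
    (φ : V → W) : Prop :=
  ∀ u v : V, H.dist (φ u) (φ v) = G.dist u v

/-- `M` has tree-dimension at most `k`. -/
def TreeDimLE {V : Type} (M : SimpleGraph V) (k : ℕ) : Prop :=
  ∃ (B : Fin k → Type) (_ : ∀ i, Fintype (B i)) (T : ∀ i, SimpleGraph (B i)),
    (∀ i, (T i).IsTree) ∧
    ∃ φ : V → (∀ i, B i), IsIsometricEmbedding M (boxProdPi T) φ

/-- `G` has a complete `k`-tree-median-decomposition. -/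
def HasCompleteTMD {V : Type} (G : SimpleGraph V) (k : ℕ) : Prop :=
  ∃ (X : Type) (_ : Fintype X) (M : SimpleGraph X) (γ : X → Set V),
    MedianGraph M ∧ TreeDimLE M k ∧
    (∀ v : V, ({x : X | v ∈ γ x}).Nonempty ∧ GeoConvex M {x : X | v ∈ γ x}) ∧
    (∀ ⦃u v : V⦄, G.Adj u v → ({x : X | u ∈ γ x} ∩ {x : X | v ∈ γ x}).Nonempty) ∧
    (∀ x : X, G.IsClique (γ x))

/-- The tree-median-dimension of `G`. -/
noncomputable def tmd {V : Type} [Fintype V] (G : SimpleGraph V) : ℕ :=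
  sInf {k | 0 < k ∧ HasCompleteTMD G k}

/-- `T` is a path graph. -/
def IsPathGraph {B : Type} (T : SimpleGraph B) : Prop :=
  ∃ n : ℕ, Nonempty (T ≃g SimpleGraph.pathGraph n)

/-- A graph is an interval graph if it can be represented by nonempty closed
intervals of the real line. -/
def IntervalGraph {V : Type} (G : SimpleGraph V) : Prop :=
  ∃ I : V → Set ℝ, (∀ v, ∃ a b : ℝ, a ≤ b ∧ I v = Set.Icc a b) ∧
    ∀ u v : V, u ≠ v → (G.Adj u v ↔ (I u ∩ I v).Nonempty)

/-- `(T, β)` is a representation of the chordal graph `H`. -/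
structure IsRepresentation {V B : Type} (H : SimpleGraph V) (T : SimpleGraph B)
    (β : B → Set V) : Prop where
  isTree : T.IsTree
  support_connected : ∀ v : V, (T.induce {t | v ∈ β t}).Connected
  adj_iff : ∀ u v : V, u ≠ v →
    (H.Adj u v ↔ ({t : B | u ∈ β t} ∩ {t : B | v ∈ β t}).Nonempty)

/-- `G` has path-width at most `k`. -/
def PathwidthLE {V : Type} (G : SimpleGraph V) (k : ℕ) : Prop :=
  ∃ (B : Type) (_ : Fintype B) (P : SimpleGraph B) (β : B → Set V),
    IsPathGraph P ∧ IsTreeDecomp G P β ∧ ∀ t : B, (β t).ncard ≤ k + 1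

/-- The radius of `T` is at most `k`. -/
def RadiusLE {B : Type} (T : SimpleGraph B) (k : ℕ) : Prop :=
  ∃ r : B, ∀ t : B, T.dist r t ≤ k

/-- The lexicographic product of two graphs. -/
def lexProd {V W : Type} (G : SimpleGraph V) (H : SimpleGraph W) :
    SimpleGraph (V × W) where
  Adj x y := G.Adj x.1 y.1 ∨ (x.1 = y.1 ∧ H.Adj x.2 y.2)
  symm := by
    refine ⟨?_⟩
    rintro x y (h | ⟨h1, h2⟩)
    · exact Or.inl h.symm
    · exact Or.inr ⟨h1.symm, h2.symm⟩
  loopless := by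
    refine ⟨?_⟩
    rintro x (h | ⟨-, h⟩) <;> exact SimpleGraph.irrefl _ h

/-!
Root the representation tree `T` at a centre `r`. The subtree `β⁻¹(v)` of a vertex `v` has a
unique node `top v` closest to `r`, and partitioning `V(G)` by the depth of `top v` gives at most
`k + 1` classes. If `u`, `v` are adjacent with tops at the same depth `d`, their subtrees share a
node `t`, and the ancestor of `t` at depth `d` lies in both subtrees, so it is both `top u` and
`top v`. Hence `top` is constant on each component of a class, all subtrees in that component
contain a common node, and the component is complete.
-/

namespace SimpleGraph

theorem Reachable.apply_eq_of_forall_adj {V α : Type*} {G : SimpleGraph V} {f : V → α}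
    (hf : ∀ ⦃x y⦄, G.Adj x y → f x = f y) {u v : V} (h : G.Reachable u v) : f u = f v := by
  obtain ⟨w⟩ := h
  induction w with
  | nil => rfl
  | cons hxy _ ih => exact (hf hxy).trans ih

namespace IsTree

variable {B : Type*} {T : SimpleGraph B} (hT : T.IsTree)

noncomputable def path (u v : B) : T.Walk u v :=
  (hT.existsUnique_path u v).exists.choose

theorem isPath_path (u v : B) : (hT.path u v).IsPath :=
  (hT.existsUnique_path u v).exists.choose_spec

theorem eq_path {u v : B} {p : T.Walk u v} (hp : p.IsPath) : p = hT.path u v :=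
  (hT.existsUnique_path u v).unique hp (hT.isPath_path u v)

theorem length_path (u v : B) : (hT.path u v).length = T.dist u v := by
  obtain ⟨p, hp, hlen⟩ := hT.connected.exists_path_of_dist u v
  rw [← hT.eq_path hp, hlen]

theorem path_eq_concat {r s t : B} (h : T.Adj s t) (hd : T.dist r t = T.dist r s + 1) :
    hT.path r t = (hT.path r s).concat h := by
  classical
  have ht : t ∉ (hT.path r s).support := fun ht => by
    have hle := (hT.path r s).length_takeUntil_le_length ht
    have hdist := T.dist_le ((hT.path r s).takeUntil t ht)
    rw [length_path] at hle
    omega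
  exact (hT.eq_path ((hT.isPath_path r s).concat ht h)).symm

noncomputable def ancestor (r t : B) (i : ℕ) : B :=
  (hT.path r t).getVert i

theorem ancestor_dist (r t : B) : hT.ancestor r t (T.dist r t) = t := by
  rw [ancestor, ← hT.length_path, Walk.getVert_length]

theorem ancestor_eq_of_adj {r s t : B} (h : T.Adj s t) {i : ℕ} (hs : i ≤ T.dist r s)
    (ht : i ≤ T.dist r t) : hT.ancestor r s i = hT.ancestor r t i := by
  wlog hd : T.dist r t = T.dist r s + 1 generalizing s t
  · have hd' := (hT.dist_eq_dist_add_one_of_adj r h).resolve_right hd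
    exact (this h.symm ht hs hd').symm
  rw [ancestor, ancestor, hT.path_eq_concat h hd, Walk.concat_eq_append, Walk.getVert_append',
    if_pos (by rw [length_path]; exact hs)]

theorem ancestor_eq_of_preconnected {S : Set B} (hS : (T.induce S).Preconnected) {r m t : B}
    (hm : m ∈ S) (hmin : ∀ s ∈ S, T.dist r m ≤ T.dist r s) (ht : t ∈ S) :
    hT.ancestor r t (T.dist r m) = m := by
  have hconst : hT.ancestor r m (T.dist r m) = hT.ancestor r t (T.dist r m) :=
    (hS ⟨m, hm⟩ ⟨t, ht⟩).apply_eq_of_forall_adj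
      (f := fun s : S => hT.ancestor r s (T.dist r m))
      fun x y hxy => hT.ancestor_eq_of_adj hxy (hmin x x.2) (hmin y y.2)
  rw [← hconst, ancestor_dist]

end IsTree

end SimpleGraph

namespace IsRepresentation

variable {V B : Type} {G : SimpleGraph V} {T : SimpleGraph B} {β : B → Set V}

theorem nonempty_support (hrep : IsRepresentation G T β) (v : V) : {t | v ∈ β t}.Nonempty :=
  let ⟨t⟩ := (hrep.support_connected v).nonempty
  ⟨t, t.2⟩

variable (hrep : IsRepresentation G T β) (r : B)

noncomputable def top (v : V) : B :=
  Function.argminOn (T.dist r) {t | v ∈ β t} (hrep.nonempty_support v)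

noncomputable def level (v : V) : ℕ :=
  T.dist r (hrep.top r v)

theorem mem_top (v : V) : v ∈ β (hrep.top r v) :=
  Function.argminOn_mem (T.dist r) {t | v ∈ β t} _

theorem level_le {v : V} {t : B} (ht : v ∈ β t) : hrep.level r v ≤ T.dist r t :=
  Function.argminOn_le _ {t | v ∈ β t} ht

theorem ancestor_level {v : V} {t : B} (ht : v ∈ β t) :
    hrep.isTree.ancestor r t (hrep.level r v) = hrep.top r v :=
  hrep.isTree.ancestor_eq_of_preconnected (hrep.support_connected v).preconnected
    (hrep.mem_top r v) (fun _ hs => hrep.level_le r hs) ht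

theorem top_eq_of_adj {u v : V} (huv : G.Adj u v) (hlevel : hrep.level r u = hrep.level r v) :
    hrep.top r u = hrep.top r v := by
  obtain ⟨t, hut, hvt⟩ := (hrep.adj_iff u v huv.ne).mp huv
  rw [← hrep.ancestor_level r hut, ← hrep.ancestor_level r hvt, hlevel]

theorem induce_level_adj_of_reachable (j : ℕ) (u v : {x | hrep.level r x = j})
    (hreach : (G.induce {x | hrep.level r x = j}).Reachable u v) (hne : u ≠ v) :
    (G.induce {x | hrep.level r x = j}).Adj u v := by
  have htop : hrep.top r u = hrep.top r v :=
    hreach.apply_eq_of_forall_adj (f := fun x : {x | hrep.level r x = j} => hrep.top r x)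
      fun x y hxy => hrep.top_eq_of_adj r hxy (x.2.trans y.2.symm)
  exact (hrep.adj_iff u v (Subtype.coe_ne_coe.mpr hne)).mpr
    ⟨hrep.top r v, htop ▸ hrep.mem_top r u, hrep.mem_top r v⟩

end IsRepresentation

theorem stmt_18_general {V : Type} (G : SimpleGraph V)
    (k : ℕ) (B : Type) (T : SimpleGraph B)
    (β : B → Set V) (hrep : IsRepresentation G T β) (hrad : RadiusLE T k) :
    ∃ P : Finset (Set V), (∀ v : V, ∃! S, S ∈ P ∧ v ∈ S) ∧ P.card ≤ k + 1 ∧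
      ∀ S ∈ P, ∀ u v : S, (G.induce S).Reachable u v → u ≠ v →
        (G.induce S).Adj u v := by
  obtain ⟨r, hr⟩ := hrad
  refine ⟨(Finset.range (k + 1)).image fun j => {v | hrep.level r v = j}, fun v => ?_,
    Finset.card_image_le.trans (Finset.card_range _).le, ?_⟩
  · refine ⟨{x | hrep.level r x = hrep.level r v}, ⟨?_, rfl⟩, ?_⟩
    · exact Finset.mem_image_of_mem _ (Finset.mem_range_succ_iff.mpr (hr _))
    · rintro S ⟨hS, hvS⟩
      obtain ⟨j, -, rfl⟩ := Finset.mem_image.mp hS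
      rw [show hrep.level r v = j from hvS]
  · intro S hS
    obtain ⟨j, -, rfl⟩ := Finset.mem_image.mp hS
    exact hrep.induce_level_adj_of_reachable r j

/-- If a chordal graph `G` has a representation tree of radius at most `k`,
then `V(G)` can be partitioned into at most `k + 1` parts each inducing a disjoint union of
complete graphs (every connected component of each induced part is complete). -/
theorem stmt_18 {V : Type} [Fintype V] (G : SimpleGraph V) (hG : Chordal G)
    (k : ℕ) (hk : 0 < k) (B : Type) [Fintype B] (T : SimpleGraph B)
    (β : B → Set V) (hrep : IsRepresentation G T β) (hrad : RadiusLE T k) :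
    ∃ P : Finset (Set V), (∀ v : V, ∃! S, S ∈ P ∧ v ∈ S) ∧ P.card ≤ k + 1 ∧
      ∀ S ∈ P, ∀ u v : S, (G.induce S).Reachable u v → u ≠ v →
        (G.induce S).Adj u v :=
  stmt_18_general G k B T β hrep hrad
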